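/- If p is a condition in ℚ*(S*,B̄,h̄), α < λ⁺, β ∈ S*, and δ < λ, then there is a condition q ≥ p such that α ∈ u^q, β ∈ v^q, and otp(e^q_{β'}) > δ for every β' ∈ v^q. -/

import Mathlib

open Cardinal Set
open scoped Classical

noncomputable section

namespace SSS

/-! ### Smallness: `A` has cardinality `< κ` -/

def SmallSet {α : Type*} (κ : Cardinal.{0}) (A : Set α) : Prop :=
  ∃ (ι : Type) (f : ι → α), #ι < κ ∧ A ⊆ Set.range f

/-! ### Transfinite sequences, normalized beyond their length -/

structure OSeq (β : Type*) [Inhabited β] where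
  len : Ordinal.{0}
  val : Ordinal.{0} → β
  norm : ∀ j, len ≤ j → val j = default

namespace OSeq

variable {β : Type*} [Inhabited β]

/-- `s ⊴ t` : initial segment. -/
def le (s t : OSeq β) : Prop := s.len ≤ t.len ∧ ∀ j < s.len, s.val j = t.val j

/-- `s ⊲ t` : proper initial segment. -/
def lt (s t : OSeq β) : Prop := s.len < t.len ∧ ∀ j < s.len, s.val j = t.val j

/-- the restriction `s|α`. -/
def restrict (s : OSeq β) (α : Ordinal.{0}) : OSeq β where
  len := min α s.len
  val := fun j => if j < min α s.len then s.val j else default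
  norm := fun j hj => if_neg (not_lt.2 hj)

/-- `s⌢⟨x⟩`. -/
def snoc (s : OSeq β) (x : β) : OSeq β where
  len := s.len + 1
  val := fun j => if j < s.len then s.val j else if j = s.len then x else default
  norm := by
    intro j hj
    have hsl : s.len < j := lt_of_lt_of_le (lt_add_one s.len) hj
    show (if j < s.len then s.val j else if j = s.len then x else default) = default
    rw [if_neg (not_lt.2 hsl.le), if_neg (by rintro rfl; exact lt_irrefl _ hsl)]

end OSeq

/-! ### Quasi trees -/

variable {β : Type*} [Inhabited β]

def IsRoot (T : Set (OSeq β)) (r : OSeq β) : Prop := r ∈ T ∧ ∀ s ∈ T, r.le s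

/-- a `λ`-quasi tree: sequences of length `< λ` with a `⊲`-smallest element. -/
def IsQuasiTree (lam : Cardinal.{0}) (T : Set (OSeq β)) : Prop :=
  (∀ s ∈ T, s.len < lam.ord) ∧ ∃ r, IsRoot T r

/-- `u` is the union of the `⊲`-increasing family `C`. -/
def IsUnionOf (u : OSeq β) (C : Set (OSeq β)) : Prop :=
  (∀ c ∈ C, c.le u) ∧ ∀ j < u.len, ∃ c ∈ C, j < c.len

/-- complete: unions of `⊲`-increasing sequences of length `< λ` of members of `T` are in `T`. -/
def IsCompleteTree (lam : Cardinal.{0}) (T : Set (OSeq β)) : Prop :=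
  ∀ C ⊆ T, C.Nonempty → IsChain OSeq.le C → SmallSet lam C →
    ∀ u, IsUnionOf u C → u ∈ T

def sucT (T : Set (OSeq β)) (η : OSeq β) : Set (OSeq β) :=
  {ν ∈ T | η.lt ν ∧ ¬∃ ρ ∈ T, η.lt ρ ∧ ρ.lt ν}

def maxT (T : Set (OSeq β)) : Set (OSeq β) := {ν ∈ T | ¬∃ ρ ∈ T, ν.lt ρ}

def hatT (T : Set (OSeq β)) : Set (OSeq β) := T \ maxT T

def restrT (T : Set (OSeq β)) (η : OSeq β) : Set (OSeq β) := {ν ∈ T | η.le ν}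

def heightT (T : Set (OSeq β)) : Ordinal.{0} := sSup (OSeq.len '' T)

def levelT (T : Set (OSeq β)) (δ : Ordinal.{0}) : Set (OSeq β) := {η ∈ T | η.len = δ}

/-- the set of limit `λ`-branches through `T`. -/
def limT (lam : Cardinal.{0}) (T : Set (OSeq β)) : Set (OSeq β) :=
  {η | η.len = lam.ord ∧ ∀ γ < lam.ord, ∃ α, γ < α ∧ α < lam.ord ∧ η.restrict α ∈ T}

/-- a `λ`-tree: quasi tree closed under initial segments longer than the root. -/
def IsLamTree (lam : Cardinal.{0}) (T : Set (OSeq β)) : Prop :=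
  IsQuasiTree lam T ∧
    ∀ r, IsRoot T r → ∀ ν ∈ T, ∀ γ, r.len ≤ γ → γ ≤ ν.len → ν.restrict γ ∈ T

/-- a front of a quasi tree. -/
def IsFront (lam : Cardinal.{0}) (T F : Set (OSeq β)) : Prop :=
  F ⊆ T ∧ (∀ s ∈ F, ∀ t ∈ F, s ≠ t → ¬s.lt t ∧ ¬t.lt s) ∧
    ∀ η ∈ limT lam T ∪ maxT T, ∃ α < lam.ord, η.restrict α ∈ F

/-! ### Filters on λ -/

def IsFilterOn (lam : Cardinal.{0}) (Ds : Set (Set Ordinal.{0})) : Prop :=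
  (∀ A ∈ Ds, A ⊆ Iio lam.ord) ∧ Iio lam.ord ∈ Ds ∧ (∅ : Set Ordinal.{0}) ∉ Ds ∧
    (∀ A ∈ Ds, ∀ B, A ⊆ B → B ⊆ Iio lam.ord → B ∈ Ds) ∧
    ∀ A ∈ Ds, ∀ B ∈ Ds, A ∩ B ∈ Ds

def IsNormalFilterOn (lam : Cardinal.{0}) (Ds : Set (Set Ordinal.{0})) : Prop :=
  IsFilterOn lam Ds ∧
    (∀ γ < lam.ord, {δ | γ ≤ δ ∧ δ < lam.ord} ∈ Ds) ∧
    ∀ A : Ordinal.{0} → Set Ordinal.{0}, (∀ i < lam.ord, A i ∈ Ds) →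
      {δ | δ < lam.ord ∧ ∀ i < δ, δ ∈ A i} ∈ Ds

/-- closed under intersections of fewer than `λ` members. -/
def IsLtComplete (lam : Cardinal.{0}) (Ds : Set (Set Ordinal.{0})) : Prop :=
  ∀ I : Set Ordinal.{0}, I.Nonempty → SmallSet lam I →
    ∀ A : Ordinal.{0} → Set Ordinal.{0}, (∀ i ∈ I, A i ∈ Ds) → (⋂ i ∈ I, A i) ∈ Ds

/-! ### The context on `λ̄` -/

def LamBarOK (lam : Cardinal.{0}) (lamBar : Ordinal.{0} → Cardinal.{0}) : Prop :=
  (∀ a b, a < b → b < lam.ord → lamBar a < lamBar b) ∧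
  (∀ a < lam.ord, ℵ₀ < lamBar a ∧ (lamBar a).IsRegular ∧ lamBar a < lam) ∧
  (∀ κ < lam, ∃ a < lam.ord, κ < lamBar a) ∧
  (∀ a < lam.ord,
    Cardinal.prod (fun b : (Iio a : Set Ordinal.{0}) => lamBar b.1) <
      Cardinal.lift.{1} (lamBar a)) ∧
  (∀ a < lam.ord, ∀ ξ, ξ < (lamBar a).ord → ξ.card ^ a.card < lamBar a)

/-! ### λ-tree creatures -/

structure TreeCreature (β : Type*) [Inhabited β] (D : Type*) where
  eta : OSeq β
  dis : D
  pos : Set (OSeq β)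
  nor : Ordinal.{0}

variable {D : Type*}

def InH (H : Ordinal.{0} → Set β) (s : OSeq β) : Prop := ∀ j < s.len, s.val j ∈ H j

def IsTreeCreature (lam : Cardinal.{0}) (H : Ordinal.{0} → Set β) (t : TreeCreature β D) : Prop :=
  t.eta.len < lam.ord ∧ InH H t.eta ∧ t.nor ≤ lam.ord ∧ t.pos.Nonempty ∧
    ∀ ν ∈ t.pos, t.eta.lt ν ∧ ν.len < lam.ord ∧ InH H ν

/-- the quasi tree determined by a system `⟨f ν : ν ∈ S⟩` (with `S = T̂`). -/
def treeOf (S : Set (OSeq β)) (f : OSeq β → TreeCreature β D) : Set (OSeq β) :=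
  S ∪ ⋃ ν ∈ S, (f ν).pos

/-- a system `⟨f ν : ν ∈ S⟩` is a legitimate element of the domain
of a tree composition operation. -/
def SystemOK (lam : Cardinal.{0}) (K : Set (TreeCreature β D)) (S : Set (OSeq β))
    (f : OSeq β → TreeCreature β D) : Prop :=
  IsQuasiTree lam (treeOf S f) ∧ IsCompleteTree lam (treeOf S f) ∧
    heightT (treeOf S f) < lam.ord ∧ hatT (treeOf S f) = S ∧
    ∀ ν ∈ S, f ν ∈ K ∧ (f ν).eta = ν ∧ (f ν).pos = sucT (treeOf S f) ν

/-- `Σ(t)` for a single creature. -/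
def sigOne (Sg : Set (OSeq β) → (OSeq β → TreeCreature β D) → Set (TreeCreature β D))
    (t : TreeCreature β D) : Set (TreeCreature β D) :=
  Sg {t.eta} (fun _ => t)

/-- `(K,Σ)` is a λ-tree creating pair for `H`. -/
structure IsTreeCreatingPair (lam : Cardinal.{0}) (H : Ordinal.{0} → Set β)
    (K : Set (TreeCreature β D))
    (Sg : Set (OSeq β) → (OSeq β → TreeCreature β D) → Set (TreeCreature β D)) : Prop where
  creature : ∀ t ∈ K, IsTreeCreature lam H t
  subK : ∀ S f, Sg S f ⊆ K
  dom : ∀ S f, (Sg S f).Nonempty → SystemOK lam K S f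
  out : ∀ S f, ∀ t ∈ Sg S f, IsRoot (treeOf S f) t.eta ∧ t.pos ⊆ maxT (treeOf S f)
  compose : ∀ S f, ∀ t ∈ Sg S f,
    ∀ (S' : OSeq β → Set (OSeq β)) (g : OSeq β → OSeq β → TreeCreature β D),
      (∀ ν ∈ S, f ν ∈ Sg (S' ν) (g ν)) →
      ∀ h : OSeq β → TreeCreature β D,
        (∀ ν ∈ S, ∀ ρ ∈ S' ν, h ρ = g ν ρ) →
        t ∈ Sg (⋃ ν ∈ S, S' ν) h
  single : ∀ t ∈ K, t ∈ sigOne Sg t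

def IsLocalPair (lam : Cardinal.{0})
    (Sg : Set (OSeq β) → (OSeq β → TreeCreature β D) → Set (TreeCreature β D)) : Prop :=
  (∀ S f, (Sg S f).Nonempty → ∀ r, IsRoot (treeOf S f) r →
      heightT (treeOf S f) = r.len + 1) ∧
  ∀ t t', t' ∈ sigOne Sg t → t'.nor ≤ t.nor

/-- `t` is the minimal creature at `η`. -/
def IsMinimalAt (K : Set (TreeCreature β D))
    (Sg : Set (OSeq β) → (OSeq β → TreeCreature β D) → Set (TreeCreature β D))
    (η : OSeq β) (t : TreeCreature β D) : Prop :=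
  t ∈ K ∧ t.eta = η ∧ ∀ s ∈ K, s.eta = η → s ∈ sigOne Sg t

def IsVeryLocalPair (lam : Cardinal.{0}) (K : Set (TreeCreature β D))
    (Sg : Set (OSeq β) → (OSeq β → TreeCreature β D) → Set (TreeCreature β D)) : Prop :=
  IsLocalPair lam Sg ∧
    ∀ η : OSeq β, (∃ t ∈ K, t.eta = η) → ∃ t, IsMinimalAt K Sg η t

/-- a tree creature `t` is `κ`-complete. -/
def IsKappaCompleteCreature
    (Sg : Set (OSeq β) → (OSeq β → TreeCreature β D) → Set (TreeCreature β D))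
    (κ : Cardinal.{0}) (t : TreeCreature β D) : Prop :=
  (∀ δ : Ordinal.{0}, δ < κ.ord → ∀ ts : Ordinal.{0} → TreeCreature β D,
      (∀ a < δ, ts a ∈ sigOne Sg t) →
      (∀ a b, a < b → b < δ → ts b ∈ sigOne Sg (ts a)) →
      (∀ a < δ, 0 < (ts a).nor) →
      ∃ td ∈ sigOne Sg t, (∀ a < δ, td ∈ sigOne Sg (ts a)) ∧
        sInf ((fun a => (ts a).nor) '' Iio δ) ≤ td.nor) ∧
  (∀ t' ∈ sigOne Sg t, t'.nor = 0 → (∃ ν, t'.pos = {ν}) ∧ sigOne Sg t' = {t'}) ∧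
  (∀ ν ∈ t.pos, ∃ t' ∈ sigOne Sg t, t'.pos = {ν} ∧ t'.nor = 0)

/-- a tree creature `t` is exactly `κ`-complete. -/
def IsExactlyKappaCompleteCreature
    (Sg : Set (OSeq β) → (OSeq β → TreeCreature β D) → Set (TreeCreature β D))
    (κ : Cardinal.{0}) (t : TreeCreature β D) : Prop :=
  IsKappaCompleteCreature Sg κ t ∧
    ∀ ts : Ordinal.{0} → TreeCreature β D,
      (∀ a < κ.ord, ts a ∈ sigOne Sg t) →
      (∀ a b, a < b → b < κ.ord → ts b ∈ sigOne Sg (ts a) ∧ ts a ≠ ts b) →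
      (¬∃ s ∈ sigOne Sg t, ∀ a < κ.ord, s ∈ sigOne Sg (ts a)) ∧
        ∃ ν, ∀ a < κ.ord, ν ∈ (ts a).pos

/-- every minimal creature `t*_η` is `kap (lh η)`-complete. -/
def PairComplete (K : Set (TreeCreature β D))
    (Sg : Set (OSeq β) → (OSeq β → TreeCreature β D) → Set (TreeCreature β D))
    (kap : Ordinal.{0} → Cardinal.{0}) : Prop :=
  ∀ η t, IsMinimalAt K Sg η t → IsKappaCompleteCreature Sg (kap η.len) t

/-- every minimal creature `t*_η` is exactly `kap (lh η)`-complete. -/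
def PairExactlyComplete (K : Set (TreeCreature β D))
    (Sg : Set (OSeq β) → (OSeq β → TreeCreature β D) → Set (TreeCreature β D))
    (kap : Ordinal.{0} → Cardinal.{0}) : Prop :=
  ∀ η t, IsMinimalAt K Sg η t → IsExactlyKappaCompleteCreature Sg (kap η.len) t

/-! ### The forcing notions `Q^tree_e(K,Σ)` -/

structure TCond (β : Type*) [Inhabited β] (D : Type*) where
  tr : Set (OSeq β)
  cf : OSeq β → TreeCreature β D

/-- membership in `Q^tree_∅(K,Σ)`. -/
def TCondOK (lam : Cardinal.{0}) (H : Ordinal.{0} → Set β) (K : Set (TreeCreature β D))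
    (p : TCond β D) : Prop :=
  p.tr.Nonempty ∧ IsQuasiTree lam p.tr ∧ IsCompleteTree lam p.tr ∧
    (∀ ν ∈ p.tr, InH H ν) ∧ maxT p.tr = ∅ ∧
    ∀ η ∈ p.tr, p.cf η ∈ K ∧ (p.cf η).eta = η ∧ (p.cf η).pos = sucT p.tr η

/-- the order on `Q^tree(K,Σ)`. -/
def TCondLe (lam : Cardinal.{0})
    (Sg : Set (OSeq β) → (OSeq β → TreeCreature β D) → Set (TreeCreature β D))
    (p q : TCond β D) : Prop :=
  q.tr ⊆ p.tr ∧ ∀ η ∈ q.tr, ∃ T0 : Set (OSeq β),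
    T0 ⊆ restrT p.tr η ∧ IsQuasiTree lam T0 ∧ IsCompleteTree lam T0 ∧
      heightT T0 < lam.ord ∧ q.cf η ∈ Sg (hatT T0) p.cf

def Qtree1 (lam : Cardinal.{0}) (H : Ordinal.{0} → Set β) (K : Set (TreeCreature β D)) :
    Set (TCond β D) :=
  {p | TCondOK lam H K p ∧ ∀ η ∈ limT lam p.tr, ∀ γ < lam.ord,
    ∃ α₀ < lam.ord, ∀ α, α₀ ≤ α → α < lam.ord → η.restrict α ∈ p.tr →
      γ ≤ (p.cf (η.restrict α)).nor}

def QtreeD (lam : Cardinal.{0}) (H : Ordinal.{0} → Set β) (K : Set (TreeCreature β D))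
    (Ds : Set (Set Ordinal.{0})) : Set (TCond β D) :=
  {p | TCondOK lam H K p ∧ ∃ Y ∈ Ds, ∀ δ ∈ Y, ∀ η ∈ levelT p.tr δ,
    δ.card.ord ≤ (p.cf η).nor}

def QtreeCl (lam : Cardinal.{0}) (H : Ordinal.{0} → Set β) (K : Set (TreeCreature β D)) :
    Set (TCond β D) :=
  {p | TCondOK lam H K p ∧
    (∀ η ∈ p.tr, ∃ ν ∈ p.tr, η.le ν ∧ ν.len.card.ord ≤ (p.cf ν).nor) ∧
    (∀ η ∈ p.tr, (p.cf η).nor = 0 ∨ η.len.card.ord ≤ (p.cf η).nor) ∧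
    (∀ r, IsRoot p.tr r → r.len.card.ord ≤ (p.cf r).nor) ∧
    ∀ δ : Ordinal.{0}, δ < lam.ord → Order.IsSuccLimit δ →
      ∀ es : Ordinal.{0} → OSeq β, (∀ i < δ, es i ∈ p.tr) →
        (∀ i j, i < j → j < δ → (es i).lt (es j)) →
        (∀ i < δ, (es i).len.card.ord ≤ (p.cf (es i)).nor) →
        ∀ u, IsUnionOf u {s | ∃ i < δ, es i = s} →
          u ∈ p.tr ∧ u.len.card.ord ≤ (p.cf u).nor}

/-! ### Games on forcing notions : the completeness game -/

variable {X : Type*}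

/-- a legal move of Incomplete at stage `i` of `Ɑ₀^λ(P,∅,r)`. -/
def G0IncLegal (P : Set X) (le : X → X → Prop) (r : X) (qs : Ordinal.{0} → X)
    (i : Ordinal.{0}) (p : X) : Prop :=
  p ∈ P ∧ le r p ∧ ∀ j < i, le (qs j) p

/-- `σ` is a winning strategy of the Complete player in `Ɑ₀^λ(P,∅,r)`. -/
def IsWinningStratComplete (lam : Cardinal.{0}) (P : Set X) (le : X → X → Prop) (r : X)
    (σ : Ordinal.{0} → (Ordinal.{0} → X) → (Ordinal.{0} → X) → X) : Prop :=
  ∀ (ps qs : Ordinal.{0} → X) (i : Ordinal.{0}), i < lam.ord →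
    (∀ j < i, G0IncLegal P le r qs j (ps j) ∧ qs j = σ j ps qs ∧
        qs j ∈ P ∧ le (ps j) (qs j)) →
    (∃ p, G0IncLegal P le r qs i p) ∧
      ∀ ps' qs' : Ordinal.{0} → X, (∀ j < i, ps' j = ps j ∧ qs' j = qs j) →
        G0IncLegal P le r qs i (ps' i) →
        σ i ps' qs' ∈ P ∧ le (ps' i) (σ i ps' qs')

/-- `P` is strategically `(<λ)`-complete. -/
def StrategicallyComplete (lam : Cardinal.{0}) (P : Set X) (le : X → X → Prop) : Prop :=
  ∀ r ∈ P, ∃ σ, IsWinningStratComplete lam P le r σ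

/-- `P` is `λ`-complete : increasing chains of length `< λ` have upper bounds. -/
def LambdaComplete (lam : Cardinal.{0}) (P : Set X) (le : X → X → Prop) : Prop :=
  ∀ δ : Ordinal.{0}, δ < lam.ord → ∀ c : Ordinal.{0} → X, (∀ i < δ, c i ∈ P) →
    (∀ i j, i < j → j < δ → le (c i) (c j)) →
    ∃ q ∈ P, ∀ i < δ, le (c i) q

/-! ### The Sacks and bounding games -/

/-- the sequences used in the Sacks game have ordinal values `< λ`. -/
def OrdValsBelow (lam : Cardinal.{0}) (η : OSeq Ordinal.{0}) : Prop :=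
  ∀ j < η.len, η.val j < lam.ord

/-- legality of a move `(s, q)` of the Generic player at stage `i` of the
Sacks/bounding game (the bound in clause (ε) is the parameter `bound`). -/
def SacksGenericLegal (lam : Cardinal.{0}) (P : Set X) (le : X → X → Prop)
    (bound : Ordinal.{0} → Cardinal.{0}) (i0 : Ordinal.{0}) (p : X)
    (S : Ordinal.{0} → Set (OSeq Ordinal.{0})) (Pm : Ordinal.{0} → OSeq Ordinal.{0} → X)
    (i : Ordinal.{0}) (s : Set (OSeq Ordinal.{0})) (q : OSeq Ordinal.{0} → X) : Prop :=
  -- (α)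
  (∀ η ∈ s, OrdValsBelow lam η ∧ η.len ≤ i + 1) ∧
  IsLamTree lam s ∧ IsCompleteTree lam s ∧ heightT s = i + 1 ∧
  (∃ r, IsRoot s r ∧ r.len = i0) ∧
  (∀ η ∈ s, ∃ ν ∈ s, η.le ν ∧ ν.len = i + 1) ∧
  -- (β)
  (∀ j, i0 ≤ j → j < i → S j = {η ∈ s | η.len ≤ j + 1}) ∧
  -- (γ)
  (∀ η ∈ levelT s (i + 1), q η ∈ P) ∧
  -- (δ)
  (∀ j, i0 ≤ j → j < i → ∀ ν ∈ levelT s (j + 1), ∀ η ∈ levelT s (i + 1),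
      ν.lt η → le (Pm j ν) (q η)) ∧
  (∀ η ∈ levelT s (i + 1), le p (q η)) ∧
  -- (ε)
  SmallSet (bound i) (levelT s (i + 1))

/-- legality of Antigeneric's answer. -/
def SacksAntiLegal (P : Set X) (le : X → X → Prop) (i : Ordinal.{0})
    (s : Set (OSeq Ordinal.{0})) (q pm : OSeq Ordinal.{0} → X) : Prop :=
  ∀ η ∈ levelT s (i + 1), pm η ∈ P ∧ le (q η) (pm η)

/-- `σ` is a winning strategy for the Generic player in the Sacks-type game with
width bound `bound` (so `Ɑ^Sacks_λ̄` for `bound = λ̄`, and `Ɑ^bd_λ` for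
`bound = const λ`). -/
def SacksWinningStrat (lam : Cardinal.{0}) (P : Set X) (le : X → X → Prop)
    (bound : Ordinal.{0} → Cardinal.{0}) (i0 : Ordinal.{0}) (p : X)
    (σ : Ordinal.{0} → (Ordinal.{0} → Set (OSeq Ordinal.{0})) → (Ordinal.{0} → OSeq Ordinal.{0} → X) →
      (Ordinal.{0} → OSeq Ordinal.{0} → X) → Set (OSeq Ordinal.{0}) × (OSeq Ordinal.{0} → X)) : Prop :=
  ∀ (S : Ordinal.{0} → Set (OSeq Ordinal.{0})) (Q Pm : Ordinal.{0} → OSeq Ordinal.{0} → X),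
    (∀ i, i0 ≤ i → i < lam.ord → S i = (σ i S Q Pm).1 ∧ Q i = (σ i S Q Pm).2) →
    (∀ i, i0 ≤ i → i < lam.ord → SacksAntiLegal P le i (S i) (Q i) (Pm i)) →
    (∀ i, i0 ≤ i → i < lam.ord →
        SacksGenericLegal lam P le bound i0 p S Pm i (S i) (Q i)) ∧
      ∃ q ∈ P, le p q ∧ ∀ i, i0 ≤ i → i < lam.ord →
        ∀ r ∈ P, le q r → ∃ η ∈ levelT (S i) (i + 1), ∃ r' ∈ P,
          le r r' ∧ le (Q i η) r'

/-- `P` has the strong `λ̄`-Sacks property. -/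
def StrongSacksProperty (lam : Cardinal.{0}) (lamBar : Ordinal.{0} → Cardinal.{0})
    (P : Set X) (le : X → X → Prop) : Prop :=
  ∀ i0 < lam.ord, ∀ p ∈ P, ∃ σ, SacksWinningStrat lam P le lamBar i0 p σ

/-- `P` has the strong `λ`-bounding property. -/
def StrongBoundingProperty (lam : Cardinal.{0}) (P : Set X) (le : X → X → Prop) : Prop :=
  ∀ i0 < lam.ord, ∀ p ∈ P, ∃ σ, SacksWinningStrat lam P le (fun _ => lam) i0 p σ

/-! ### Forgetful λ-creatures and the forcings `Q*_e(K,Σ)` -/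

structure Creature (β : Type*) [Inhabited β] (D : Type*) where
  adn : Ordinal.{0}
  aup : Ordinal.{0}
  dis : D
  vals : Set (Ordinal.{0} → β)
  nor : Ordinal.{0}

def IsCreature (lam : Cardinal.{0}) (H : Ordinal.{0} → Set β) (t : Creature β D) : Prop :=
  t.adn < t.aup ∧ t.aup < lam.ord ∧ t.nor ≤ lam.ord ∧ t.vals.Nonempty ∧
    ∀ f ∈ t.vals, (∀ j, j < t.adn ∨ t.aup ≤ j → f j = default) ∧
      ∀ j, t.adn ≤ j → j < t.aup → f j ∈ H j

/-- restriction of a function to the interval `[a,b)`, normalized. -/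
def restrictIv (a b : Ordinal.{0}) (f : Ordinal.{0} → β) : Ordinal.{0} → β :=
  fun j => if a ≤ j ∧ j < b then f j else default

/-- a sequence `⟨ts i : i < j⟩` is a legitimate member of the domain of a
composition operation. -/
def CSeqOK (K : Set (Creature β D)) (j : Ordinal.{0})
    (ts : Ordinal.{0} → Creature β D) : Prop :=
  0 < j ∧ (∀ i < j, ts i ∈ K) ∧
    (∀ i, i + 1 < j → (ts i).aup = (ts (i + 1)).adn) ∧
    ∀ i < j, Order.IsSuccLimit i → (ts i).adn = sSup ((fun i' => (ts i').aup) '' Iio i)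

/-- `(K,Σ)` is a λ-creating pair for `H`. -/
structure IsCreatingPair (lam : Cardinal.{0}) (H : Ordinal.{0} → Set β)
    (K : Set (Creature β D))
    (Sg : Ordinal.{0} → (Ordinal.{0} → Creature β D) → Set (Creature β D)) : Prop where
  creature : ∀ t ∈ K, IsCreature lam H t
  subK : ∀ j ts, Sg j ts ⊆ K
  dom : ∀ j ts, (Sg j ts).Nonempty → j < lam.ord ∧ CSeqOK K j ts
  out : ∀ j ts, ∀ t ∈ Sg j ts,
    t.adn = (ts 0).adn ∧ t.aup = sSup ((fun i => (ts i).aup) '' Iio j) ∧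
      ∀ f ∈ t.vals, ∀ i < j, restrictIv (ts i).adn (ts i).aup f ∈ (ts i).vals
  compose : ∀ j ts, ∀ t ∈ Sg j ts,
    ∀ (zs : Ordinal.{0} → Ordinal.{0}) (ss : Ordinal.{0} → Ordinal.{0} → Creature β D),
      (∀ i < j, ts i ∈ Sg (zs i) (ss i)) →
      ∀ (j' : Ordinal.{0}) (e : Ordinal.{0} → Ordinal.{0} → Ordinal.{0})
        (cs : Ordinal.{0} → Creature β D),
        (∀ i ζ, i < j → ζ < zs i → e i ζ < j' ∧ cs (e i ζ) = ss i ζ) →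
        (∀ i i' ζ ζ', i < j → i' < j → ζ < zs i → ζ' < zs i' →
          ((i < i' ∨ (i = i' ∧ ζ < ζ')) ↔ e i ζ < e i' ζ')) →
        (∀ k < j', ∃ i, ∃ ζ, i < j ∧ ζ < zs i ∧ e i ζ = k) →
        t ∈ Sg j' cs
  single : ∀ t ∈ K, t ∈ Sg 1 (fun _ => t)

def csigOne (Sg : Ordinal.{0} → (Ordinal.{0} → Creature β D) → Set (Creature β D))
    (t : Creature β D) : Set (Creature β D) :=
  Sg 1 (fun _ => t)

def IsMinimalAtC (K : Set (Creature β D))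
    (Sg : Ordinal.{0} → (Ordinal.{0} → Creature β D) → Set (Creature β D))
    (a : Ordinal.{0}) (t : Creature β D) : Prop :=
  t ∈ K ∧ t.adn = a ∧ ∀ s ∈ K, s.adn = a → s ∈ csigOne Sg t

def IsVeryLocalPairC (lam : Cardinal.{0}) (K : Set (Creature β D))
    (Sg : Ordinal.{0} → (Ordinal.{0} → Creature β D) → Set (Creature β D)) : Prop :=
  (∀ t ∈ K, t.aup = t.adn + 1) ∧
  (∀ t t', t' ∈ csigOne Sg t → t'.nor ≤ t.nor) ∧
  ∀ a < lam.ord, ∃ t, IsMinimalAtC K Sg a t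

def IsKappaCompleteCreatureC
    (Sg : Ordinal.{0} → (Ordinal.{0} → Creature β D) → Set (Creature β D))
    (κ : Cardinal.{0}) (t : Creature β D) : Prop :=
  (∀ δ : Ordinal.{0}, δ < κ.ord → ∀ ts : Ordinal.{0} → Creature β D,
      (∀ a < δ, ts a ∈ csigOne Sg t) →
      (∀ a b, a < b → b < δ → ts b ∈ csigOne Sg (ts a)) →
      (∀ a < δ, 0 < (ts a).nor) →
      ∃ td ∈ csigOne Sg t, (∀ a < δ, td ∈ csigOne Sg (ts a)) ∧
        sInf ((fun a => (ts a).nor) '' Iio δ) ≤ td.nor) ∧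
  (∀ t' ∈ csigOne Sg t, t'.nor = 0 → (∃ f, t'.vals = {f}) ∧ csigOne Sg t' = {t'}) ∧
  (∀ f ∈ t.vals, ∃ t' ∈ csigOne Sg t, t'.vals = {f} ∧ t'.nor = 0)

def IsExactlyKappaCompleteCreatureC
    (Sg : Ordinal.{0} → (Ordinal.{0} → Creature β D) → Set (Creature β D))
    (κ : Cardinal.{0}) (t : Creature β D) : Prop :=
  IsKappaCompleteCreatureC Sg κ t ∧
    ∀ ts : Ordinal.{0} → Creature β D,
      (∀ a < κ.ord, ts a ∈ csigOne Sg t) →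
      (∀ a b, a < b → b < κ.ord → ts b ∈ csigOne Sg (ts a) ∧ ts a ≠ ts b) →
      (¬∃ s ∈ csigOne Sg t, ∀ a < κ.ord, s ∈ csigOne Sg (ts a)) ∧
        ∃ f, ∀ a < κ.ord, f ∈ (ts a).vals

def PairCompleteC (K : Set (Creature β D))
    (Sg : Ordinal.{0} → (Ordinal.{0} → Creature β D) → Set (Creature β D))
    (kap : Ordinal.{0} → Cardinal.{0}) : Prop :=
  ∀ a t, IsMinimalAtC K Sg a t → IsKappaCompleteCreatureC Sg (kap a) t

def PairExactlyCompleteC (K : Set (Creature β D))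
    (Sg : Ordinal.{0} → (Ordinal.{0} → Creature β D) → Set (Creature β D))
    (kap : Ordinal.{0} → Cardinal.{0}) : Prop :=
  ∀ a t, IsMinimalAtC K Sg a t → IsExactlyKappaCompleteCreatureC Sg (kap a) t

/-- conditions of `Q*_∅(K,Σ)`. -/
structure CCond (β : Type*) [Inhabited β] (D : Type*) where
  w : OSeq β
  ts : Ordinal.{0} → Creature β D

def CCondOK (lam : Cardinal.{0}) (H : Ordinal.{0} → Set β) (K : Set (Creature β D))
    (p : CCond β D) : Prop :=
  (∀ i < lam.ord, p.ts i ∈ K) ∧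
  (∀ i < lam.ord, (p.ts i).aup = (p.ts (i + 1)).adn) ∧
  (∀ i < lam.ord, Order.IsSuccLimit i →
    (p.ts i).adn = sSup ((fun i' => (p.ts i').aup) '' Iio i)) ∧
  p.w.len = (p.ts 0).adn ∧ InH H p.w

def CCondLe (lam : Cardinal.{0})
    (Sg : Ordinal.{0} → (Ordinal.{0} → Creature β D) → Set (Creature β D))
    (p q : CCond β D) : Prop :=
  ∃ ids : Ordinal.{0} → Ordinal.{0},
    (∀ ζ ξ, ζ < ξ → ξ < lam.ord → ids ζ < ids ξ) ∧
    (∀ ζ < lam.ord, ids ζ < lam.ord) ∧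
    (∀ ζ < lam.ord, Order.IsSuccLimit ζ → ids ζ = sSup (ids '' Iio ζ)) ∧
    p.w.le q.w ∧
    q.w.len = sSup (insert p.w.len ((fun i => (p.ts i).aup) '' Iio (ids 0))) ∧
    (∀ i < ids 0, restrictIv (p.ts i).adn (p.ts i).aup q.w.val ∈ (p.ts i).vals) ∧
    ∀ ζ < lam.ord, q.ts ζ ∈ Sg (ids (ζ + 1) - ids ζ) (fun k => p.ts (ids ζ + k))

def Qstar1 (lam : Cardinal.{0}) (H : Ordinal.{0} → Set β) (K : Set (Creature β D)) :
    Set (CCond β D) :=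
  {p | CCondOK lam H K p ∧ ∀ γ < lam.ord, ∃ i0 < lam.ord,
    ∀ i, i0 ≤ i → i < lam.ord → γ ≤ (p.ts i).nor}

def QstarD (lam : Cardinal.{0}) (H : Ordinal.{0} → Set β) (K : Set (Creature β D))
    (Ds : Set (Set Ordinal.{0})) : Set (CCond β D) :=
  {p | CCondOK lam H K p ∧ ∃ Y ∈ Ds, ∀ i ∈ Y, (p.ts i).adn.card.ord ≤ (p.ts i).nor}

/-! ### The uniformization forcing `ℚ*(S*,B̄,h̄)` -/

structure QCond where
  u : Set Ordinal.{0}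
  v : Set Ordinal.{0}
  e : Ordinal.{0} → Set Ordinal.{0}
  h : Ordinal.{0} → Ordinal.{0}

def IsClosedBoundedIn (e : Set Ordinal.{0}) (b : Ordinal.{0}) : Prop :=
  (∃ γ < b, ∀ x ∈ e, x ≤ γ) ∧ ∀ s ⊆ e, s.Nonempty → sSup s ∈ e

def IsClubIn (S : Set Ordinal.{0}) (b : Ordinal.{0}) : Prop :=
  S ⊆ Iio b ∧ (∀ γ < b, ∃ x ∈ S, γ ≤ x) ∧
    ∀ γ < b, γ ≠ 0 → (∀ ξ < γ, ∃ x ∈ S, ξ < x ∧ x < γ) → γ ∈ S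

def QCondOK (lam : Cardinal.{0}) (xis : Ordinal.{0}) (Sstar : Set Ordinal.{0})
    (B : Ordinal.{0} → Set Ordinal.{0})
    (hb : Ordinal.{0} → Ordinal.{0} → Ordinal.{0}) (p : QCond) : Prop :=
  p.u ⊆ Iio (Order.succ lam).ord ∧ SmallSet lam p.u ∧
  p.v ⊆ Sstar ∧ SmallSet lam p.v ∧
  (∀ b ∈ p.v, p.e b ⊆ B b ∧ p.e b ⊆ p.u ∧ IsClosedBoundedIn (p.e b) b) ∧
  (∀ b ∈ p.v, sSup (p.e b) = sSup (p.u ∩ Iio b)) ∧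
  (∀ b1 ∈ p.v, ∀ b2 ∈ p.v, b1 < b2 →
    b1 < sSup (p.e b2) ∧ sSup (B b2 ∩ Iio b1) < sSup (p.e b1)) ∧
  (∀ a ∈ p.u, p.h a < xis) ∧
  (∀ b ∈ p.v, ∀ a ∈ p.e b, p.h a = hb b a) ∧
  (∀ a, a ∉ p.u → p.h a = 0) ∧ (∀ b, b ∉ p.v → p.e b = ∅)

def QCondLe (p q : QCond) : Prop :=
  p.u ⊆ q.u ∧ (∀ a ∈ p.u, q.h a = p.h a) ∧ p.v ⊆ q.v ∧
    ∀ b ∈ p.v, p.e b ⊆ q.e b ∧ ∀ x ∈ q.e b, x ∉ p.e b → ∀ y ∈ p.e b, y < x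

/-! ### Category prebases, smallness bases and the ideals `J_κ̄` -/

def OrdEven (a : Ordinal.{0}) : Prop :=
  ∃ (b : Ordinal.{0}) (n : ℕ), (b = 0 ∨ Order.IsSuccLimit b) ∧ a = b + 2 * n

/-- `σ` is a winning strategy of player II in the game `Ɑ*(𝒜,μ)`. -/
def IsWinningStratII (mu : Cardinal.{0}) (Afam : Set (Set Ordinal.{0}))
    (σ : Ordinal.{0} → (Ordinal.{0} → Set Ordinal.{0}) → Set Ordinal.{0}) : Prop :=
  ∀ A : Ordinal.{0} → Set Ordinal.{0},
    (∀ a, a < mu.ord → OrdEven a → A a ∈ Afam) →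
    (∀ a, a < mu.ord → ¬OrdEven a → A a = σ a A) →
    (∀ a, a < mu.ord → A a ∈ Afam) ∧ (⋂ a ∈ Iio mu.ord, A a).Nonempty

def IsCategoryPrebase (mu κ : Cardinal.{0}) (Afam : Set (Set Ordinal.{0})) : Prop :=
  (∀ A ∈ Afam, A ⊆ Iio κ.ord) ∧ Iio κ.ord ∈ Afam ∧
  (∃ σ, IsWinningStratII mu Afam σ) ∧
  ∀ A ∈ Afam, ∀ ξ < κ.ord, ∃ B ∈ Afam, B ⊆ A \ {ξ}

def Presmall (Afam : Set (Set Ordinal.{0})) (Xx : Set Ordinal.{0}) : Prop :=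
  ∀ A ∈ Afam, ∃ B ∈ Afam, B ⊆ A \ Xx

def KapBarOK (lam : Cardinal.{0}) (lamBar kapBar : Ordinal.{0} → Cardinal.{0}) : Prop :=
  (∀ a b, a < b → b < lam.ord → kapBar a < kapBar b) ∧
  (∀ a < lam.ord, ℵ₀ < kapBar a ∧ (kapBar a).IsRegular ∧ kapBar a < lam ∧
    lamBar a < kapBar a) ∧
  ∀ c < lam, ∃ a < lam.ord, c < kapBar a

def IsSmallnessBase (lam : Cardinal.{0}) (lamBar kapBar : Ordinal.{0} → Cardinal.{0})
    (As : Ordinal.{0} → Set (Set Ordinal.{0})) : Prop :=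
  ∀ a < lam.ord, IsCategoryPrebase (lamBar a) (kapBar a) (As a)

def TreeOverKap (lam : Cardinal.{0}) (kapBar : Ordinal.{0} → Cardinal.{0})
    (T : Set (OSeq Ordinal.{0})) : Prop :=
  IsQuasiTree lam T ∧ IsCompleteTree lam T ∧ IsLamTree lam T ∧ maxT T = ∅ ∧
    ∀ η ∈ T, ∀ j < η.len, η.val j < (kapBar j).ord

def SuccSetIn (kapBar : Ordinal.{0} → Cardinal.{0}) (T : Set (OSeq Ordinal.{0}))
    (η : OSeq Ordinal.{0}) : Set Ordinal.{0} :=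
  {ξ | ξ < (kapBar η.len).ord ∧ η.snoc ξ ∈ T}

def SmallTreeA (lam : Cardinal.{0}) (kapBar : Ordinal.{0} → Cardinal.{0})
    (As : Ordinal.{0} → Set (Set Ordinal.{0})) (T : Set (OSeq Ordinal.{0})) : Prop :=
  TreeOverKap lam kapBar T ∧
    ∀ a < lam.ord, ∀ η ∈ levelT T a, Presmall (As a) (SuccSetIn kapBar T η)

def SmallTreeD (lam : Cardinal.{0}) (kapBar : Ordinal.{0} → Cardinal.{0})
    (As : Ordinal.{0} → Set (Set Ordinal.{0})) (Ds : Set (Set Ordinal.{0}))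
    (T : Set (OSeq Ordinal.{0})) : Prop :=
  TreeOverKap lam kapBar T ∧
    {a | a < lam.ord ∧ ∀ η ∈ levelT T a, Presmall (As a) (SuccSetIn kapBar T η)} ∈ Ds

def KapSpace (lam : Cardinal.{0}) (kapBar : Ordinal.{0} → Cardinal.{0}) :
    Set (OSeq Ordinal.{0}) :=
  {f | f.len = lam.ord ∧ ∀ j < lam.ord, f.val j < (kapBar j).ord}

def JIdealA (lam : Cardinal.{0}) (kapBar : Ordinal.{0} → Cardinal.{0})
    (As : Ordinal.{0} → Set (Set Ordinal.{0})) : Set (Set (OSeq Ordinal.{0})) :=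
  {Xx | Xx ⊆ KapSpace lam kapBar ∧ ∃ Ts : Ordinal.{0} → Set (OSeq Ordinal.{0}),
    (∀ ε < lam.ord, SmallTreeA lam kapBar As (Ts ε)) ∧
    Xx ⊆ ⋃ ε ∈ Iio lam.ord, limT lam (Ts ε)}

def JIdealD (lam : Cardinal.{0}) (kapBar : Ordinal.{0} → Cardinal.{0})
    (As : Ordinal.{0} → Set (Set Ordinal.{0})) (Ds : Set (Set Ordinal.{0})) :
    Set (Set (OSeq Ordinal.{0})) :=
  {Xx | Xx ⊆ KapSpace lam kapBar ∧ ∃ Ts : Ordinal.{0} → Set (OSeq Ordinal.{0}),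
    (∀ ε < lam.ord, SmallTreeD lam kapBar As Ds (Ts ε)) ∧
    Xx ⊆ ⋃ ε ∈ Iio lam.ord, limT lam (Ts ε)}

universe u

def covNum {α : Type u} (Space : Set α) (J : Set (Set α)) : Cardinal.{u} :=
  sInf {c | ∃ Y : Set (Set α), Y ⊆ J ∧ #(↥Y) = c ∧ ⋃₀ Y = Space}

/-! ### The λ̄-exactivity of a tree creating pair -/

def disInit (d d' : Ordinal.{0} × (Ordinal.{0} → TreeCreature β D)) : Prop :=
  d.1 ≤ d'.1 ∧ ∀ ξ ≤ d.1, d.2 ξ = d'.2 ξ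

def Kex (lamBar : Ordinal.{0} → Cardinal.{0}) (K : Set (TreeCreature β D))
    (Sg : Set (OSeq β) → (OSeq β → TreeCreature β D) → Set (TreeCreature β D))
    (tstar : OSeq β → TreeCreature β D) :
    Set (TreeCreature β (Ordinal.{0} × (Ordinal.{0} → TreeCreature β D))) :=
  {t | t.dis.1 < (lamBar t.eta.len).ord ∧
    t.dis.2 0 = tstar t.eta ∧
    (∀ ξ ≤ t.dis.1, t.dis.2 ξ ∈ sigOne Sg (tstar t.eta)) ∧
    (∀ ξ ζ, ξ < ζ → ζ ≤ t.dis.1 →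
      t.dis.2 ζ ∈ sigOne Sg (t.dis.2 ξ) ∧ t.dis.2 ξ ≠ t.dis.2 ζ) ∧
    t.pos = (t.dis.2 t.dis.1).pos ∧
    t.nor = sInf ((fun ξ => (t.dis.2 ξ).nor) '' Iic t.dis.1)}

def Sgex (lamBar : Ordinal.{0} → Cardinal.{0}) (K : Set (TreeCreature β D))
    (Sg : Set (OSeq β) → (OSeq β → TreeCreature β D) → Set (TreeCreature β D))
    (tstar : OSeq β → TreeCreature β D) :
    Set (OSeq β) →
      (OSeq β → TreeCreature β (Ordinal.{0} × (Ordinal.{0} → TreeCreature β D))) →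
      Set (TreeCreature β (Ordinal.{0} × (Ordinal.{0} → TreeCreature β D))) :=
  fun S f => {t' | ∃ t, t ∈ Kex lamBar K Sg tstar ∧ t' ∈ Kex lamBar K Sg tstar ∧
    S = {t.eta} ∧ f t.eta = t ∧ t'.eta = t.eta ∧ disInit t.dis t'.dis}

/-! ### The tree creating pair `(K(Ā),Σ(Ā))` -/

/-- `⟨A a : a < δ⟩` is an initial segment of a play of `Ɑ*(𝒜,μ)` in which
player II uses the strategy `σ`. -/
def PartialPlayII (mu : Cardinal.{0}) (Afam : Set (Set Ordinal.{0}))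
    (σ : Ordinal.{0} → (Ordinal.{0} → Set Ordinal.{0}) → Set Ordinal.{0})
    (δ : Ordinal.{0}) (A : Ordinal.{0} → Set Ordinal.{0}) : Prop :=
  δ ≤ mu.ord ∧ (∀ a < δ, OrdEven a → A a ∈ Afam) ∧
    ∀ a < δ, ¬OrdEven a → A a = σ a A

/-- the type of the `dis` component of creatures in `K(Ā)`. -/
abbrev DAty : Type 1 := Ordinal.{0} ⊕ (Ordinal.{0} × (Ordinal.{0} → Set Ordinal.{0}))

def KA (lam : Cardinal.{0}) (lamBar kapBar : Ordinal.{0} → Cardinal.{0})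
    (As : Ordinal.{0} → Set (Set Ordinal.{0}))
    (st : Ordinal.{0} → Ordinal.{0} → (Ordinal.{0} → Set Ordinal.{0}) → Set Ordinal.{0}) :
    Set (TreeCreature Ordinal.{0} DAty) :=
  {t | (t.eta.len < lam.ord ∧ ∀ j < t.eta.len, t.eta.val j < (kapBar j).ord) ∧
    ((∃ ξ, t.dis = Sum.inl ξ ∧ ξ < (kapBar t.eta.len).ord ∧
        t.pos = {t.eta.snoc ξ} ∧ t.nor = 0) ∨
      (∃ δ A, t.dis = Sum.inr (δ, A) ∧ δ < (lamBar t.eta.len).ord ∧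
        PartialPlayII (lamBar t.eta.len) (As t.eta.len) (st t.eta.len) δ A ∧
        t.pos = {ν | ∃ ξ, ξ < (kapBar t.eta.len).ord ∧ (∀ i < δ, ξ ∈ A i) ∧
          ν = t.eta.snoc ξ} ∧
        t.nor = t.eta.len + 1))}

def SgA (lam : Cardinal.{0}) (lamBar kapBar : Ordinal.{0} → Cardinal.{0})
    (As : Ordinal.{0} → Set (Set Ordinal.{0}))
    (st : Ordinal.{0} → Ordinal.{0} → (Ordinal.{0} → Set Ordinal.{0}) → Set Ordinal.{0}) :
    Set (OSeq Ordinal.{0}) → (OSeq Ordinal.{0} → TreeCreature Ordinal.{0} DAty) →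
      Set (TreeCreature Ordinal.{0} DAty) :=
  fun S f => {t' | ∃ t, t ∈ KA lam lamBar kapBar As st ∧
    t' ∈ KA lam lamBar kapBar As st ∧
    S = {t.eta} ∧ f t.eta = t ∧ t'.eta = t.eta ∧
    ((t.nor = 0 ∧ t' = t) ∨
      (t.nor ≠ 0 ∧ ∃ δ A, t.dis = Sum.inr (δ, A) ∧
        ((t'.nor = 0 ∧ t'.pos ⊆ t.pos) ∨
          (t'.nor ≠ 0 ∧ ∃ δ' A', t'.dis = Sum.inr (δ', A') ∧ δ ≤ δ' ∧
            ∀ i < δ, A' i = A i))))}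


/-! ### Auxiliary lemmas for Proposition 4.2(2) -/

lemma smallSet_iff_mk_lt {κ : Cardinal.{0}} {A : Set Ordinal.{0}} :
    SmallSet κ A ↔ #A < Cardinal.lift.{1} κ := by
  constructor
  · rintro ⟨ι, f, hι, hsub⟩
    calc #A ≤ #(Set.range f) := Cardinal.mk_le_mk_of_subset hsub
      _ ≤ Cardinal.lift.{1} #ι := by simpa using Cardinal.mk_range_le_lift (f := f)
      _ < Cardinal.lift.{1} κ := Cardinal.lift_lt.2 hι
  · intro h
    obtain ⟨c, hc, hec⟩ := Cardinal.lt_lift_iff.1 h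
    have hmk : #A = #(ULift.{1} c.out) := by
      rw [Cardinal.mk_uLift, Cardinal.mk_out, hec]
    obtain ⟨e⟩ := Cardinal.eq.1 hmk
    refine ⟨c.out, fun i => (e.symm ⟨i⟩ : A), by rwa [Cardinal.mk_out], ?_⟩
    intro x hx
    refine ⟨(e ⟨x, hx⟩).down, ?_⟩
    show ((e.symm ⟨(e ⟨x, hx⟩).down⟩ : A) : Ordinal) = x
    have h0 : (⟨(e ⟨x, hx⟩).down⟩ : ULift.{1} c.out) = e ⟨x, hx⟩ := rfl
    rw [h0, e.symm_apply_apply]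

lemma sSup_lt_of_small {A : Set Ordinal.{0}} {c : Ordinal.{0}} (hc0 : 0 < c)
    (hA : ∀ x ∈ A, x < c) (hsm : #A < Cardinal.lift.{1} c.cof) : sSup A < c := by
  rcases A.eq_empty_or_nonempty with rfl | hne
  · simpa [csSup_empty] using hc0
  · obtain ⟨ι, f, hι, hsub⟩ := smallSet_iff_mk_lt.2 hsm
    set f' : ι → Ordinal.{0} := fun i => if f i ∈ A then f i else 0 with hf'
    have h1 : sSup A ≤ iSup f' := by
      refine csSup_le hne fun x hx => ?_
      obtain ⟨i, hi⟩ := hsub hx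
      have : x = f' i := by rw [hf']; simp only []; rw [hi, if_pos hx]
      rw [this]
      exact le_ciSup (Ordinal.bddAbove_range f') i
    have h2 : iSup f' < c := by
      refine Ordinal.iSup_lt_ord hι fun i => ?_
      by_cases hfi : f i ∈ A
      · simpa [hf', hfi] using hA _ hfi
      · simpa [hf', hfi] using hc0
    exact h1.trans_lt h2

lemma csSup_eq_of_max {s : Set Ordinal.{0}} {x : Ordinal.{0}} (hx : x ∈ s)
    (hb : ∀ y ∈ s, y ≤ x) : sSup s = x :=
  le_antisymm (csSup_le ⟨x, hx⟩ hb) (le_csSup ⟨x, hb⟩ hx)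

/-- continuity of the increasing enumeration of a club. -/
lemma sSup_image_club {lam : Cardinal.{0}} {b : Ordinal.{0}} {g : Ordinal.{0} → Ordinal.{0}}
    {Bb : Set Ordinal.{0}}
    (hmono : ∀ i j, i < j → j < lam.ord → g i < g j)
    (hrange : Bb = g '' Iio lam.ord) (hclub : IsClubIn Bb b)
    {A : Set Ordinal.{0}} (hA : A.Nonempty) (hAsub : A ⊆ Iio lam.ord)
    (hsup : sSup A < lam.ord) :
    sSup (g '' A) = g (sSup A) := by
  have hbddA : BddAbove A := ⟨lam.ord, fun x hx => (hAsub hx).le⟩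
  have hmono' : ∀ i j, i ≤ j → j < lam.ord → g i ≤ g j := by
    intro i j hij hj
    rcases eq_or_lt_of_le hij with rfl | h
    · exact le_rfl
    · exact (hmono i j h hj).le
  have hgB : ∀ i < lam.ord, g i ∈ Bb := by
    intro i hi; rw [hrange]; exact ⟨i, hi, rfl⟩
  have hBlt : ∀ x ∈ Bb, x < b := fun x hx => hclub.1 hx
  have hbddgA : BddAbove (g '' A) := by
    refine ⟨b, ?_⟩
    rintro x ⟨i, hi, rfl⟩
    exact (hBlt _ (hgB i (hAsub hi))).le
  have hub : sSup (g '' A) ≤ g (sSup A) := by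
    refine csSup_le (hA.image g) ?_
    rintro x ⟨i, hi, rfl⟩
    exact hmono' i (sSup A) (le_csSup hbddA hi) hsup
  by_cases hmem : sSup A ∈ A
  · exact le_antisymm hub (le_csSup hbddgA ⟨sSup A, hmem, rfl⟩)
  · -- `sSup A` is a limit of `A`
    have hAlt : ∀ a ∈ A, ∃ a' ∈ A, a < a' := by
      intro a ha
      have : a < sSup A := lt_of_le_of_ne (le_csSup hbddA ha) (fun h => hmem (h ▸ ha))
      exact exists_lt_of_lt_csSup hA this
    set γ := sSup (g '' A) with hγ
    obtain ⟨a0, ha0⟩ := id hA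
    obtain ⟨a1, ha1, ha01⟩ := hAlt a0 ha0
    have hlt01 : g a0 < g a1 := hmono _ _ ha01 (hAsub ha1)
    have hγpos : 0 < γ :=
      lt_of_le_of_lt (zero_le (a := g a0))
        (hlt01.trans_le (le_csSup hbddgA ⟨a1, ha1, rfl⟩))
    have hγb : γ < b := hub.trans_lt (hBlt _ (hgB _ hsup))
    have hγB : γ ∈ Bb := by
      refine hclub.2.2 γ hγb hγpos.ne' ?_
      intro ξ hξ
      obtain ⟨x, hxm, hξx⟩ := exists_lt_of_lt_csSup (hA.image g) hξ
      obtain ⟨a, ha, rfl⟩ := hxm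
      obtain ⟨a', ha', haa'⟩ := hAlt a ha
      refine ⟨g a, hgB a (hAsub ha), hξx, ?_⟩
      exact lt_of_lt_of_le (hmono _ _ haa' (hAsub ha')) (le_csSup hbddgA ⟨a', ha', rfl⟩)
    rw [hrange] at hγB
    obtain ⟨k, hk, hgk⟩ := hγB
    have hk1 : sSup A ≤ k := by
      refine csSup_le hA fun a ha => ?_
      by_contra hka
      push_neg at hka
      have : g k < g a := hmono _ _ hka (hAsub ha)
      rw [hgk] at this
      exact absurd (le_csSup hbddgA ⟨a, ha, rfl⟩) (not_le.2 this)
    have : g (sSup A) ≤ g k := hmono' _ _ hk1 hk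
    rw [hgk] at this
    exact le_antisymm hub this

set_option maxHeartbeats 1600000 in
/-- Proposition 4.2(2)(easyprop): conditions of `ℚ*(S*,B̄,h̄)` can be extended to
include any `α` in `u`, any `β ∈ S*` in `v`, and have all `e`-parts of order type
greater than any given `δ < λ`. -/
theorem statement_11
    (lam : Cardinal.{0}) (hlam : lam.IsInaccessible)
    (xis : Ordinal.{0}) (hxi : 2 ≤ xis ∧ xis < lam.ord)
    (Sstar : Set Ordinal.{0})
    (hS : ∀ d ∈ Sstar, d < (Order.succ lam).ord ∧ d.cof = lam)
    (B : Ordinal.{0} → Set Ordinal.{0})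
    (hB : ∀ b ∈ Sstar, IsClubIn (B b) b ∧
      ∃ g : Ordinal.{0} → Ordinal.{0},
        (∀ i j, i < j → j < lam.ord → g i < g j) ∧ B b = g '' Iio lam.ord)
    (hb : Ordinal.{0} → Ordinal.{0} → Ordinal.{0})
    (hhb : ∀ b ∈ Sstar, ∀ a ∈ B b, hb b a < xis)
    (p : QCond) (hp : QCondOK lam xis Sstar B hb p)
    (a : Ordinal.{0}) (haa : a < (Order.succ lam).ord)
    (b : Ordinal.{0}) (hbS : b ∈ Sstar)
    (δ : Ordinal.{0}) (hδ : δ < lam.ord) :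
    ∃ q, QCondOK lam xis Sstar B hb q ∧ QCondLe p q ∧ a ∈ q.u ∧ b ∈ q.v ∧
      -- `otp(e^q_{β'}) > δ` : there is a strictly increasing `(δ+1)`-sequence in `e^q_{β'}`
      ∀ b' ∈ q.v, ∃ g : Ordinal.{0} → Ordinal.{0},
        (∀ i j, i < j → j ≤ δ → g i < g j) ∧ ∀ i, i ≤ δ → g i ∈ q.e b' := by
  classical
  obtain ⟨hp1, hp2, hp3, hp4, hp5, hp6, hp7, hp8, hp9, hp10, hp11⟩ := hp
  obtain ⟨hxi2, hxilt⟩ := hxi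
  have hlinf : ℵ₀ ≤ lam := hlam.1.le
  have hlinf1 : ℵ₀ ≤ Cardinal.lift.{1} lam := Cardinal.aleph0_le_lift.2 hlinf
  have hlord : Order.IsSuccLimit lam.ord := Cardinal.isSuccLimit_ord hlinf
  have hxi0 : (0 : Ordinal.{0}) < xis :=
    lt_of_lt_of_le (by norm_num : (0 : Ordinal.{0}) < 2) hxi2
  have hadd : ∀ x < lam.ord, ∀ y < lam.ord, x + y < lam.ord := by
    intro x hx y hy
    rw [Cardinal.lt_ord] at hx hy ⊢
    rw [Ordinal.card_add]
    exact Cardinal.add_lt_of_lt hlinf hx hy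
  set vq : Set Ordinal.{0} := insert b p.v with hvqdef
  have hvqS : ∀ b' ∈ vq, b' ∈ Sstar := by
    rintro b' (rfl | h)
    · exact hbS
    · exact hp3 h
  have hcof : ∀ b' ∈ vq, b'.cof = lam := fun b' h => (hS b' (hvqS b' h)).2
  have hblt' : ∀ b' ∈ vq, b' < (Order.succ lam).ord := fun b' h => (hS b' (hvqS b' h)).1
  have hlimb : ∀ b' ∈ vq, Order.IsSuccLimit b' := by
    intro b' h
    rw [← Ordinal.aleph0_le_cof, hcof b' h]
    exact hlinf
  have h0b : ∀ b' ∈ vq, 0 < b' := fun b' h => (hlimb b' h).pos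
  -- increasing enumerations of the clubs
  obtain ⟨G, hG⟩ : ∃ G : Ordinal.{0} → Ordinal.{0} → Ordinal.{0}, ∀ b' ∈ vq,
      (∀ i j, i < j → j < lam.ord → G b' i < G b' j) ∧
      B b' = G b' '' Iio lam.ord := by
    refine ⟨fun b' => if h : b' ∈ Sstar then ((hB b' h).2).choose else id, ?_⟩
    intro b' h
    have hs := hvqS b' h
    have hsp := ((hB b' hs).2).choose_spec
    simp only [dif_pos hs]
    exact ⟨hsp.1, hsp.2⟩
  have hGmono : ∀ b' ∈ vq, ∀ i j, i ≤ j → j < lam.ord → G b' i ≤ G b' j := by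
    intro b' h i j hij hj
    rcases eq_or_lt_of_le hij with rfl | hlt
    · exact le_rfl
    · exact ((hG b' h).1 i j hlt hj).le
  have hclub : ∀ b' ∈ vq, IsClubIn (B b') b' := fun b' h => (hB b' (hvqS b' h)).1
  have hGB : ∀ b' ∈ vq, ∀ i < lam.ord, G b' i ∈ B b' := by
    intro b' h i hi
    rw [(hG b' h).2]
    exact ⟨i, hi, rfl⟩
  have hBlt : ∀ b' ∈ vq, ∀ x ∈ B b', x < b' := fun b' h x hx => (hclub b' h).1 hx
  -- uniform facts about `p.e b'` for `b' ∈ vq`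
  have hpcase : ∀ b' ∈ vq, p.e b' = ∅ ∨ b' ∈ p.v := by
    intro b' _
    by_cases hv : b' ∈ p.v
    · exact Or.inr hv
    · exact Or.inl (hp11 b' hv)
  have hpeB : ∀ b' ∈ vq, p.e b' ⊆ B b' := by
    intro b' h
    rcases hpcase b' h with he | hv
    · rw [he]; exact empty_subset _
    · exact (hp5 b' hv).1
  have hpeu : ∀ b' ∈ vq, p.e b' ⊆ p.u := by
    intro b' h
    rcases hpcase b' h with he | hv
    · rw [he]; exact empty_subset _
    · exact (hp5 b' hv).2.1
  have hpelt : ∀ b' ∈ vq, ∀ y ∈ p.e b', y < b' :=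
    fun b' h y hy => hBlt b' h y (hpeB b' h hy)
  have hpecl : ∀ b' ∈ vq, ∀ s ⊆ p.e b', s.Nonempty → sSup s ∈ p.e b' := by
    intro b' h s hs hne
    rcases hpcase b' h with he | hv
    · obtain ⟨x, hx⟩ := hne
      rw [he] at hs
      exact absurd (hs hx) (notMem_empty x)
    · exact (hp5 b' hv).2.2.2 s hs hne
  have hpesup : ∀ b' ∈ vq, sSup (p.e b') < b' := by
    intro b' h
    rcases (p.e b').eq_empty_or_nonempty with he | hne
    · rw [he]
      simpa [csSup_empty] using h0b b' h
    · rcases hpcase b' h with he | hv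
      · rw [he] at hne; exact absurd hne (by simp)
      · obtain ⟨γ0, hγ0, hub⟩ := (hp5 b' hv).2.2.1
        exact lt_of_le_of_lt (csSup_le hne hub) hγ0
  have hpesup' : ∀ b' ∈ vq, ∀ y ∈ p.e b', y ≤ sSup (p.e b') :=
    fun b' h y hy => le_csSup ⟨b', fun x hx => (hpelt b' h x hx).le⟩ hy
  -- cardinalities
  have hpu_card : #p.u < Cardinal.lift.{1} lam := smallSet_iff_mk_lt.1 hp2
  have hone : (1 : Cardinal.{1}) < Cardinal.lift.{1} lam :=
    lt_of_lt_of_le Cardinal.one_lt_aleph0 hlinf1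
  have hvq_card : #vq < Cardinal.lift.{1} lam := by
    calc #vq ≤ #p.v + 1 := Cardinal.mk_insert_le
      _ < Cardinal.lift.{1} lam :=
        Cardinal.add_lt_of_lt hlinf1 (smallSet_iff_mk_lt.1 hp4) hone
  -- the club of a bigger point intersected below `b'` is bounded
  have hBcap : ∀ b' ∈ vq, ∀ b'' ∈ vq, b' < b'' → sSup (B b'' ∩ Iio b') < b' := by
    intro b' h b'' h'' hlt
    obtain ⟨x, hxB, hbx⟩ := (hclub b'' h'').2.1 b' hlt
    rw [(hG b'' h'').2] at hxB
    obtain ⟨i0, hi0, rfl⟩ := hxB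
    have hsub : B b'' ∩ Iio b' ⊆ G b'' '' Iio i0 := by
      rintro x ⟨hxB, hxb⟩
      rw [(hG b'' h'').2] at hxB
      obtain ⟨i, hi, rfl⟩ := hxB
      refine ⟨i, ?_, rfl⟩
      by_contra hii
      rw [mem_Iio, not_lt] at hii
      exact absurd (lt_of_lt_of_le hxb (hbx.trans (hGmono b'' h'' i0 i hii hi)))
        (lt_irrefl _)
    refine sSup_lt_of_small (h0b b' h) (fun x hx => hx.2) ?_
    rw [hcof b' h]
    calc #(B b'' ∩ Iio b' : Set Ordinal.{0}) ≤ #(G b'' '' Iio i0) :=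
        Cardinal.mk_le_mk_of_subset hsub
      _ ≤ #(Iio i0 : Set Ordinal.{0}) := Cardinal.mk_image_le
      _ = Cardinal.lift.{1} i0.card := Ordinal.mk_Iio_ordinal i0
      _ < Cardinal.lift.{1} lam := Cardinal.lift_lt.2 (Cardinal.lt_ord.1 hi0)
  -- the auxiliary sets `M b'` and their suprema `γf b'`
  set M : Ordinal.{0} → Set Ordinal.{0} := fun b' =>
    ((fun y => y + 1) '' ((p.u ∪ {a} ∪ vq) ∩ Iio b')) ∪
      ((fun b'' => sSup (B b'' ∩ Iio b') + 1) '' (vq ∩ Ioi b')) ∪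
      {sSup (p.e b') + 1} with hMdef
  set γf : Ordinal.{0} → Ordinal.{0} := fun b' => sSup (M b') with hγdef
  have hMlt : ∀ b' ∈ vq, ∀ x ∈ M b', x < b' := by
    intro b' h x hx
    rcases hx with (⟨y, hy, rfl⟩ | ⟨b'', hb'', rfl⟩) | hx
    · exact (hlimb b' h).succ_lt hy.2
    · exact (hlimb b' h).succ_lt (hBcap b' h b'' hb''.1 hb''.2)
    · rw [mem_singleton_iff] at hx
      rw [hx]
      exact (hlimb b' h).succ_lt (hpesup b' h)
  have hMcard : ∀ b' ∈ vq, #(M b') < Cardinal.lift.{1} lam := by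
    intro b' h
    have h1 : #(((fun y => y + 1) '' ((p.u ∪ {a} ∪ vq) ∩ Iio b')) : Set Ordinal.{0}) <
        Cardinal.lift.{1} lam := by
      calc #(((fun y => y + 1) '' ((p.u ∪ {a} ∪ vq) ∩ Iio b')) : Set Ordinal.{0})
          ≤ #((p.u ∪ {a} ∪ vq) ∩ Iio b' : Set Ordinal.{0}) := Cardinal.mk_image_le
        _ ≤ #(p.u ∪ {a} ∪ vq : Set Ordinal.{0}) :=
            Cardinal.mk_le_mk_of_subset inter_subset_left
        _ ≤ #(p.u ∪ {a} : Set Ordinal.{0}) + #vq := Cardinal.mk_union_le _ _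
        _ ≤ (#p.u + #({a} : Set Ordinal.{0})) + #vq :=
            add_le_add_left (Cardinal.mk_union_le _ _) _
        _ < Cardinal.lift.{1} lam := by
            rw [Cardinal.mk_singleton]
            exact Cardinal.add_lt_of_lt hlinf1
              (Cardinal.add_lt_of_lt hlinf1 hpu_card hone) hvq_card
    have h2 : #(((fun b'' => sSup (B b'' ∩ Iio b') + 1) '' (vq ∩ Ioi b')) : Set Ordinal.{0}) <
        Cardinal.lift.{1} lam := by
      calc #(((fun b'' => sSup (B b'' ∩ Iio b') + 1) '' (vq ∩ Ioi b')) : Set Ordinal.{0})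
          ≤ #(vq ∩ Ioi b' : Set Ordinal.{0}) := Cardinal.mk_image_le
        _ ≤ #vq := Cardinal.mk_le_mk_of_subset inter_subset_left
        _ < Cardinal.lift.{1} lam := hvq_card
    calc #(M b') ≤ #(((fun y => y + 1) '' ((p.u ∪ {a} ∪ vq) ∩ Iio b')) ∪
            ((fun b'' => sSup (B b'' ∩ Iio b') + 1) '' (vq ∩ Ioi b')) : Set Ordinal.{0}) +
            #({sSup (p.e b') + 1} : Set Ordinal.{0}) := by
          rw [hMdef]
          exact Cardinal.mk_union_le _ _
      _ ≤ (#(((fun y => y + 1) '' ((p.u ∪ {a} ∪ vq) ∩ Iio b')) : Set Ordinal.{0}) +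
            #(((fun b'' => sSup (B b'' ∩ Iio b') + 1) '' (vq ∩ Ioi b')) : Set Ordinal.{0})) +
            #({sSup (p.e b') + 1} : Set Ordinal.{0}) :=
          add_le_add_left (Cardinal.mk_union_le _ _) _
      _ < Cardinal.lift.{1} lam := by
          rw [Cardinal.mk_singleton]
          exact Cardinal.add_lt_of_lt hlinf1 (Cardinal.add_lt_of_lt hlinf1 h1 h2) hone
  have hγlt : ∀ b' ∈ vq, γf b' < b' := by
    intro b' h
    refine sSup_lt_of_small (h0b b' h) (hMlt b' h) ?_
    rw [hcof b' h]
    exact hMcard b' h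
  have hMle : ∀ b' ∈ vq, ∀ x ∈ M b', x ≤ γf b' :=
    fun b' h x hx => le_csSup ⟨b', fun y hy => (hMlt b' h y hy).le⟩ hx
  have hγmem : ∀ b' ∈ vq, ∀ y, (y ∈ p.u ∨ y = a ∨ y ∈ vq) → y < b' → y < γf b' := by
    intro b' h y hy hyb
    have hmem : y + 1 ∈ M b' := by
      refine Or.inl (Or.inl ⟨y, ⟨?_, hyb⟩, rfl⟩)
      rcases hy with hy | rfl | hy
      · exact Or.inl (Or.inl hy)
      · exact Or.inl (Or.inr rfl)
      · exact Or.inr hy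
    exact lt_of_lt_of_le (lt_add_one y) (hMle b' h _ hmem)
  have hγBcap : ∀ b' ∈ vq, ∀ b'' ∈ vq, b' < b'' → sSup (B b'' ∩ Iio b') < γf b' := by
    intro b' h b'' h'' hlt
    have hmem : sSup (B b'' ∩ Iio b') + 1 ∈ M b' :=
      Or.inl (Or.inr ⟨b'', ⟨h'', hlt⟩, rfl⟩)
    exact lt_of_lt_of_le (lt_add_one _) (hMle b' h _ hmem)
  have hγpe : ∀ b' ∈ vq, sSup (p.e b') < γf b' := by
    intro b' h
    have hmem : sSup (p.e b') + 1 ∈ M b' := Or.inr rfl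
    exact lt_of_lt_of_le (lt_add_one _) (hMle b' h _ hmem)
  -- choose starting points of the new blocks
  have hIex : ∀ b' ∈ vq, ∃ i, i < lam.ord ∧ γf b' < G b' i := by
    intro b' h
    obtain ⟨x, hxB, hγx⟩ :=
      (hclub b' h).2.1 (γf b' + 1) ((hlimb b' h).succ_lt (hγlt b' h))
    rw [(hG b' h).2] at hxB
    obtain ⟨i, hi, rfl⟩ := hxB
    exact ⟨i, hi, lt_of_lt_of_le (lt_add_one _) hγx⟩
  obtain ⟨If, hI⟩ : ∃ If : Ordinal.{0} → Ordinal.{0}, ∀ b' ∈ vq,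
      If b' < lam.ord ∧ γf b' < G b' (If b') := by
    refine ⟨fun b' => if h : ∃ i, i < lam.ord ∧ γf b' < G b' i then h.choose else 0, ?_⟩
    intro b' h
    have hex := hIex b' h
    simp only [dif_pos hex]
    exact hex.choose_spec
  have hIδ : ∀ j ≤ δ, ∀ b' ∈ vq, If b' + j < lam.ord :=
    fun j hj b' h => hadd _ (hI b' h).1 _ (lt_of_le_of_lt hj hδ)
  set new : Ordinal.{0} → Set Ordinal.{0} :=
    fun b' => G b' '' Icc (If b') (If b' + δ) with hnewdef
  set top : Ordinal.{0} → Ordinal.{0} := fun b' => G b' (If b' + δ) with htopdef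
  have hIccsub : ∀ b' ∈ vq, Icc (If b') (If b' + δ) ⊆ Iio lam.ord :=
    fun b' h k hk => lt_of_le_of_lt hk.2 (hIδ δ le_rfl b' h)
  have hnewB : ∀ b' ∈ vq, new b' ⊆ B b' := by
    rintro b' h x ⟨k, hk, rfl⟩
    exact hGB b' h k (hIccsub b' h hk)
  have hnewlt : ∀ b' ∈ vq, ∀ x ∈ new b', x < b' :=
    fun b' h x hx => hBlt b' h x (hnewB b' h hx)
  have hnewgt : ∀ b' ∈ vq, ∀ x ∈ new b', γf b' < x := by
    rintro b' h x ⟨k, hk, rfl⟩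
    exact lt_of_lt_of_le (hI b' h).2 (hGmono b' h _ k hk.1 (hIccsub b' h hk))
  have htopmem : ∀ b' ∈ vq, top b' ∈ new b' :=
    fun b' _ => ⟨If b' + δ, ⟨le_self_add, le_rfl⟩, rfl⟩
  have hnewle : ∀ b' ∈ vq, ∀ x ∈ new b', x ≤ top b' := by
    rintro b' h x ⟨k, hk, rfl⟩
    exact hGmono b' h k _ hk.2 (hIδ δ le_rfl b' h)
  have hγtop : ∀ b' ∈ vq, γf b' < top b' := fun b' h => hnewgt b' h _ (htopmem b' h)
  -- cross relations between the new blocks and the old condition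
  have hcross : ∀ b1 ∈ vq, ∀ b2 ∈ vq, b1 < b2 → ∀ x ∈ new b1, ∀ y ∈ new b2, x < y := by
    intro b1 h1 b2 h2 h12 x hx y hy
    exact lt_trans (lt_trans (hnewlt b1 h1 x hx) (hγmem b2 h2 b1 (Or.inr (Or.inr h1)) h12))
      (hnewgt b2 h2 y hy)
  have hdisj : ∀ b1 ∈ vq, ∀ b2 ∈ vq, b1 ≠ b2 → ∀ x, x ∈ new b1 → x ∈ new b2 → False := by
    intro b1 h1 b2 h2 hne x hx1 hx2
    rcases hne.lt_or_gt with h12 | h12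
    · exact lt_irrefl x (hcross b1 h1 b2 h2 h12 x hx1 x hx2)
    · exact lt_irrefl x (hcross b2 h2 b1 h1 h12 x hx2 x hx1)
  have hnew_pu : ∀ b' ∈ vq, ∀ x ∈ new b', x ∉ p.u := by
    intro b' h x hx hxu
    exact lt_irrefl x (lt_trans (hγmem b' h x (Or.inl hxu) (hnewlt b' h x hx))
      (hnewgt b' h x hx))
  have hnew_a : ∀ b' ∈ vq, ∀ x ∈ new b', x ≠ a := by
    intro b' h x hx hxa
    exact lt_irrefl x (lt_trans (hγmem b' h x (Or.inr (Or.inl hxa)) (hnewlt b' h x hx))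
      (hnewgt b' h x hx))
  have hold_new : ∀ b' ∈ vq, ∀ y ∈ p.e b', ∀ x ∈ new b', y < x := by
    intro b' h y hy x hx
    exact lt_of_le_of_lt (hpesup' b' h y hy)
      (lt_trans (hγpe b' h) (hnewgt b' h x hx))
  -- the new condition
  set NN : Set Ordinal.{0} := ⋃ b' ∈ vq, new b' with hNNdef
  set uq : Set Ordinal.{0} := insert a (p.u ∪ NN) with huqdef
  set eq' : Ordinal.{0} → Set Ordinal.{0} :=
    fun b' => if b' ∈ vq then p.e b' ∪ new b' else ∅ with heqdef
  have hNNmem : ∀ x, x ∈ NN ↔ ∃ b' ∈ vq, x ∈ new b' := by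
    intro x
    rw [hNNdef]
    simp only [mem_iUnion, exists_prop]
  obtain ⟨hq, hhq_new, hhq_old⟩ : ∃ hq : Ordinal.{0} → Ordinal.{0},
      (∀ b' ∈ vq, ∀ x ∈ new b', hq x = hb b' x) ∧
      (∀ x, x ∉ NN → hq x = p.h x) := by
    refine ⟨fun x => if h : ∃ b', b' ∈ vq ∧ x ∈ new b' then hb h.choose x else p.h x,
      ?_, ?_⟩
    · intro b' h x hx
      have hex : ∃ b'', b'' ∈ vq ∧ x ∈ new b'' := ⟨b', h, hx⟩
      simp only [dif_pos hex]
      obtain ⟨h1, h2⟩ := hex.choose_spec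
      rcases eq_or_ne hex.choose b' with he | hne
      · rw [he]
      · exact (hdisj _ h1 b' h hne x h2 hx).elim
    · intro x hx
      refine dif_neg fun hex => ?_
      obtain ⟨b', h, hx'⟩ := hex
      exact hx ((hNNmem x).2 ⟨b', h, hx'⟩)
  have hNN_uq : NN ⊆ uq := fun x hx => mem_insert_of_mem _ (Or.inr hx)
  have hpu_uq : p.u ⊆ uq := fun x hx => mem_insert_of_mem _ (Or.inl hx)
  have heq_subuq : ∀ b' ∈ vq, p.e b' ∪ new b' ⊆ uq := by
    intro b' h
    refine union_subset (fun x hx => hpu_uq (hpeu b' h hx)) (fun x hx => ?_)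
    exact hNN_uq ((hNNmem x).2 ⟨b', h, hx⟩)
  -- suprema computations
  have hsup_e : ∀ b' ∈ vq, sSup (p.e b' ∪ new b') = top b' := by
    intro b' h
    refine csSup_eq_of_max (Or.inr (htopmem b' h)) ?_
    rintro y (hy | hy)
    · exact (hold_new b' h y hy _ (htopmem b' h)).le
    · exact hnewle b' h y hy
  have hsup_u : ∀ b' ∈ vq, sSup (uq ∩ Iio b') = top b' := by
    intro b' h
    refine csSup_eq_of_max ⟨hNN_uq ((hNNmem _).2 ⟨b', h, htopmem b' h⟩),
      hnewlt b' h _ (htopmem b' h)⟩ ?_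
    rintro y ⟨hyu, hyb⟩
    rw [huqdef] at hyu
    rcases mem_insert_iff.1 hyu with rfl | hyu
    · exact (lt_trans (hγmem b' h y (Or.inr (Or.inl rfl)) hyb) (hγtop b' h)).le
    rcases (mem_union _ _ _).1 hyu with hyu | hyu
    · exact (lt_trans (hγmem b' h y (Or.inl hyu) hyb) (hγtop b' h)).le
    · obtain ⟨b'', h'', hy'⟩ := (hNNmem y).1 hyu
      rcases lt_trichotomy b'' b' with hlt | heq | hgt
      · refine (lt_trans (lt_trans (hnewlt b'' h'' y hy')
          (hγmem b' h b'' (Or.inr (Or.inr h'')) hlt)) (hγtop b' h)).le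
      · rw [heq] at hy'
        exact hnewle b' h y hy'
      · exact absurd hyb (not_lt.2 (le_of_lt (lt_trans
          (hγmem b'' h'' b' (Or.inr (Or.inr h)) hgt) (hnewgt b'' h'' y hy'))))
  -- closedness of the extended `e`-parts
  have hclosed : ∀ b' ∈ vq, ∀ s ⊆ p.e b' ∪ new b', s.Nonempty →
      sSup s ∈ p.e b' ∪ new b' := by
    intro b' h s hs hne
    rcases (s ∩ new b').eq_empty_or_nonempty with h2 | h2
    · have hsub : s ⊆ p.e b' := by
        intro x hx
        rcases hs hx with h' | h'
        · exact h'
        · have hmem : x ∈ s ∩ new b' := ⟨hx, h'⟩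
          rw [h2] at hmem
          exact hmem.elim
      exact Or.inl (hpecl b' h s hsub hne)
    · have hbdd : BddAbove s := ⟨b', by
        rintro x hx
        rcases hs hx with h' | h'
        · exact (hpelt b' h x h').le
        · exact (hnewlt b' h x h').le⟩
      have hbdd2 : BddAbove (s ∩ new b') := ⟨b', fun x hx => (hnewlt b' h x hx.2).le⟩
      have heqsup : sSup s = sSup (s ∩ new b') := by
        refine le_antisymm (csSup_le hne ?_) (csSup_le_csSup hbdd h2 inter_subset_left)
        intro x hx
        rcases hs hx with h' | h'
        · obtain ⟨y, hy⟩ := h2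
          exact le_trans (hold_new b' h x h' y hy.2).le (le_csSup hbdd2 hy)
        · exact le_csSup hbdd2 ⟨hx, h'⟩
      set A : Set Ordinal.{0} :=
        {k | k ∈ Icc (If b') (If b' + δ) ∧ G b' k ∈ s ∩ new b'} with hAdef
      have himg : G b' '' A = s ∩ new b' := by
        apply Subset.antisymm
        · rintro x ⟨k, hk, rfl⟩
          exact hk.2
        · intro x hx
          obtain ⟨k, hk, rfl⟩ := hx.2
          exact ⟨k, ⟨hk, hx⟩, rfl⟩
      have hAne : A.Nonempty := by
        obtain ⟨x, hx⟩ := h2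
        obtain ⟨k, hk, rfl⟩ := hx.2
        exact ⟨k, hk, hx⟩
      have hAsub : A ⊆ Iio lam.ord := fun k hk => hIccsub b' h hk.1
      have hAbdd : BddAbove A := ⟨If b' + δ, fun k hk => hk.1.2⟩
      have hAsup_le : sSup A ≤ If b' + δ := csSup_le hAne fun k hk => hk.1.2
      have hAsup_ge : If b' ≤ sSup A := by
        obtain ⟨k, hk⟩ := id hAne
        exact hk.1.1.trans (le_csSup hAbdd hk)
      have hcont := sSup_image_club (hG b' h).1 (hG b' h).2 (hclub b' h) hAne hAsub
        (lt_of_le_of_lt hAsup_le (hIδ δ le_rfl b' h))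
      rw [himg] at hcont
      refine Or.inr ?_
      rw [heqsup, hcont]
      exact ⟨sSup A, ⟨hAsup_ge, hAsup_le⟩, rfl⟩
  -- smallness of the new parts
  have hδ1 : (δ + 1 : Ordinal.{0}).card < lam :=
    Cardinal.lt_ord.1 (hadd δ hδ 1 (Ordinal.one_lt_of_isSuccLimit hlord))
  have hnewcard : ∀ b', #(new b') ≤ Cardinal.lift.{1} (δ + 1 : Ordinal.{0}).card := by
    intro b'
    have hmapmem : ∀ k : (Icc (If b') (If b' + δ) : Set Ordinal.{0}),
        k.1 - If b' ∈ (Iio (δ + 1) : Set Ordinal.{0}) := by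
      intro k
      exact lt_of_le_of_lt (Ordinal.sub_le.2 k.2.2) (lt_add_one δ)
    have key : #(Icc (If b') (If b' + δ) : Set Ordinal.{0}) ≤
        #(Iio (δ + 1) : Set Ordinal.{0}) := by
      refine Cardinal.mk_le_of_injective (f := fun k => ⟨k.1 - If b', hmapmem k⟩) ?_
      intro k1 k2 hk
      have h1 := congrArg Subtype.val hk
      simp only at h1
      refine Subtype.ext ?_
      rw [← Ordinal.add_sub_cancel_of_le k1.2.1, h1, Ordinal.add_sub_cancel_of_le k2.2.1]
    calc #(new b') ≤ #(Icc (If b') (If b' + δ) : Set Ordinal.{0}) := Cardinal.mk_image_le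
      _ ≤ #(Iio (δ + 1) : Set Ordinal.{0}) := key
      _ = Cardinal.lift.{1} (δ + 1 : Ordinal.{0}).card := Ordinal.mk_Iio_ordinal _
  have hNNcard : #NN < Cardinal.lift.{1} lam := by
    have hcov : NN ⊆ image2 (fun b' j => G b' (If b' + j)) vq (Iio (δ + 1)) := by
      intro x hx
      obtain ⟨b', h, hx'⟩ := (hNNmem x).1 hx
      obtain ⟨k, hk, rfl⟩ := hx'
      refine ⟨b', h, k - If b', ?_, ?_⟩
      · exact lt_of_le_of_lt (Ordinal.sub_le.2 hk.2) (lt_add_one δ)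
      · dsimp only
        rw [Ordinal.add_sub_cancel_of_le hk.1]
    calc #NN ≤ #(image2 (fun b' j => G b' (If b' + j)) vq (Iio (δ + 1)) : Set Ordinal.{0}) :=
        Cardinal.mk_le_mk_of_subset hcov
      _ ≤ #vq * #(Iio (δ + 1) : Set Ordinal.{0}) := Cardinal.mk_image2_le
      _ = #vq * Cardinal.lift.{1} (δ + 1 : Ordinal.{0}).card := by
          rw [Ordinal.mk_Iio_ordinal]
      _ < Cardinal.lift.{1} lam :=
          Cardinal.mul_lt_of_lt hlinf1 hvq_card (Cardinal.lift_lt.2 hδ1)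
  have huq_card : #uq < Cardinal.lift.{1} lam := by
    calc #uq ≤ #(p.u ∪ NN : Set Ordinal.{0}) + 1 := Cardinal.mk_insert_le
      _ ≤ (#p.u + #NN) + 1 := add_le_add_left (Cardinal.mk_union_le _ _) _
      _ < Cardinal.lift.{1} lam :=
          Cardinal.add_lt_of_lt hlinf1
            (Cardinal.add_lt_of_lt hlinf1 hpu_card hNNcard) hone
  -- assembling the condition
  refine ⟨⟨uq, vq, eq', hq⟩, ⟨?_, ?_, ?_, ?_, ?_, ?_, ?_, ?_, ?_, ?_, ?_⟩,
    ⟨hpu_uq, ?_, subset_insert b p.v, ?_⟩, mem_insert a (p.u ∪ NN),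
    mem_insert b p.v, ?_⟩
  · -- u ⊆ Iio (succ lam).ord
    dsimp only
    intro x hx
    rw [huqdef] at hx
    rcases mem_insert_iff.1 hx with rfl | hx
    · exact haa
    rcases (mem_union _ _ _).1 hx with hx | hx
    · exact hp1 hx
    · obtain ⟨b', h, hx'⟩ := (hNNmem x).1 hx
      exact lt_trans (hnewlt b' h x hx') (hblt' b' h)
  · -- SmallSet u
    dsimp only
    exact smallSet_iff_mk_lt.2 huq_card
  · -- v ⊆ Sstar
    dsimp only
    exact fun b' h => hvqS b' h
  · -- SmallSet v
    dsimp only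
    exact smallSet_iff_mk_lt.2 hvq_card
  · -- e-parts: subsets and closed boundedness
    dsimp only
    intro b' h
    simp only [heqdef, if_pos h]
    refine ⟨union_subset (hpeB b' h) (hnewB b' h), heq_subuq b' h,
      ⟨⟨top b', hnewlt b' h _ (htopmem b' h), ?_⟩, hclosed b' h⟩⟩
    rintro x (hx | hx)
    · exact (hold_new b' h x hx _ (htopmem b' h)).le
    · exact hnewle b' h x hx
  · -- sSup equality
    dsimp only
    intro b' h
    simp only [heqdef, if_pos h]
    rw [hsup_e b' h, hsup_u b' h]
  · -- ordering clauses between members of v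
    dsimp only
    intro b1 h1 b2 h2 h12
    simp only [heqdef, if_pos h1, if_pos h2]
    rw [hsup_e b1 h1, hsup_e b2 h2]
    exact ⟨lt_trans (hγmem b2 h2 b1 (Or.inr (Or.inr h1)) h12) (hγtop b2 h2),
      lt_trans (hγBcap b1 h1 b2 h2 h12) (hγtop b1 h1)⟩
  · -- values of h are < xis
    dsimp only
    intro x hx
    by_cases hxN : x ∈ NN
    · obtain ⟨b', h, hx'⟩ := (hNNmem x).1 hxN
      rw [hhq_new b' h x hx']
      exact hhb b' (hvqS b' h) x (hnewB b' h hx')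
    · rw [hhq_old x hxN]
      rw [huqdef] at hx
      rcases mem_insert_iff.1 hx with rfl | hx
      · by_cases hau : x ∈ p.u
        · exact hp8 x hau
        · rw [hp10 x hau]; exact hxi0
      rcases (mem_union _ _ _).1 hx with hx | hx
      · exact hp8 x hx
      · exact absurd hx hxN
  · -- h agrees with hb on e-parts
    dsimp only
    intro b' h x hx
    simp only [heqdef, if_pos h] at hx
    rcases hx with hx | hx
    · have hbv : b' ∈ p.v := by
        rcases hpcase b' h with he | hv
        · rw [he] at hx; exact absurd hx (notMem_empty x)
        · exact hv
      have hxN : x ∉ NN := by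
        intro hN
        obtain ⟨b'', h'', hx''⟩ := (hNNmem x).1 hN
        exact hnew_pu b'' h'' x hx'' (hpeu b' h hx)
      rw [hhq_old x hxN]
      exact hp9 b' hbv x hx
    · exact hhq_new b' h x hx
  · -- h vanishes outside u
    dsimp only
    intro x hx
    have hxN : x ∉ NN := fun hN => hx (hNN_uq hN)
    rw [hhq_old x hxN]
    exact hp10 x (fun h => hx (hpu_uq h))
  · -- e vanishes outside v
    dsimp only
    intro b' h
    simp only [heqdef, if_neg h]
  · -- h is preserved on old u
    dsimp only
    intro x hx
    have hxN : x ∉ NN := by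
      intro hN
      obtain ⟨b', h, hx'⟩ := (hNNmem x).1 hN
      exact hnew_pu b' h x hx' hx
    exact hhq_old x hxN
  · -- e-parts end-extend
    dsimp only
    intro b' hbv
    have h : b' ∈ vq := mem_insert_of_mem _ hbv
    constructor
    · simp only [heqdef, if_pos h]
      exact subset_union_left
    · intro x hx hxe y hy
      simp only [heqdef, if_pos h] at hx
      rcases hx with hx | hx
      · exact absurd hx hxe
      · exact hold_new b' h y hy x hx
  · -- the (δ+1)-sequences
    dsimp only
    intro b' h
    refine ⟨fun j => G b' (If b' + j), ?_, ?_⟩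
    · intro i j hij hjδ
      exact (hG b' h).1 _ _ (add_lt_add_right hij _) (hIδ j hjδ b' h)
    · intro j hj
      simp only [heqdef, if_pos h]
      exact Or.inr ⟨If b' + j, ⟨le_self_add, add_le_add_right hj _⟩, rfl⟩

end SSS
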